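/- The pairwise-optimal gossip coverage map T_{ij} maps connected N-partitions to connected N-partitions; in particular if p ∈ ConnPart and (i,j) ∈ E(p), then T_{ij}(p) ∈ ConnPart. -/

import Mathlib

open scoped ENNReal symmDiff

/-- Weight of a path (list of vertices): sum of edge weights of consecutive pairs. -/
noncomputable def pathWeight {V : Type*} (w : V → V → ℝ≥0∞) : List V → ℝ≥0∞
  | [] => 0
  | [_] => 0
  | a :: b :: l => w a b + pathWeight w (b :: l)
termination_by l => l.length

/-- `l` is a walk from `x` to `y` inside the induced subgraph `G ∩ S`. -/
def IsWalkIn {V : Type*} (G : SimpleGraph V) (S : Set V) (x y : V) (l : List V) : Prop :=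
  l.Chain' G.Adj ∧ (∀ v ∈ l, v ∈ S) ∧ l.head? = some x ∧ l.getLast? = some y

/-- Shortest-path distance between `x` and `y` in the induced subgraph `G ∩ S`
(`⊤` if there is no walk). -/
noncomputable def gdist {V : Type*} (G : SimpleGraph V) (w : V → V → ℝ≥0∞)
    (S : Set V) (x y : V) : ℝ≥0∞ :=
  sInf (pathWeight w '' {l | IsWalkIn G S x y l})

/-- `S` is a nonempty subset inducing a connected subgraph of `G`. -/
def ConnectedIn {V : Type*} (G : SimpleGraph V) (S : Set V) : Prop :=
  S.Nonempty ∧ ∀ x ∈ S, ∀ y ∈ S, ∃ l, IsWalkIn G S x y l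

/-- Two subsets are adjacent if some edge of `G` joins them. -/
def AdjSets {V : Type*} (G : SimpleGraph V) (A B : Set V) : Prop :=
  ∃ a ∈ A, ∃ b ∈ B, G.Adj a b

/-- One-center cost `H₁(h; S) = ∑_{k ∈ S} d_S(h,k) φ(k)`. -/
noncomputable def H1 {V : Type*} [Fintype V] (G : SimpleGraph V) (w : V → V → ℝ≥0∞)
    (φ : V → ℝ≥0∞) (h : V) (S : Set V) : ℝ≥0∞ :=
  ∑ k : V, S.indicator (fun k => gdist G w S h k * φ k) k

/-- The set of minimizers of `H₁(·; S)` over `S`. -/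
def argminH1 {V : Type*} [Fintype V] (G : SimpleGraph V) (w : V → V → ℝ≥0∞)
    (φ : V → ℝ≥0∞) (S : Set V) : Set V :=
  {h ∈ S | ∀ h' ∈ S, H1 G w φ h S ≤ H1 G w φ h' S}

/-- Generalized centroid: least element (total order on `V`) of the argmin of `H₁(·; S)`. -/
noncomputable def Cd {V : Type*} [Fintype V] [LinearOrder V] [Nonempty V]
    (G : SimpleGraph V) (w : V → V → ℝ≥0∞) (φ : V → ℝ≥0∞) (S : Set V) : V :=
  if hne : ((argminH1 G w φ S).toFinite.toFinset).Nonempty then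
    (argminH1 G w φ S).toFinite.toFinset.min' hne
  else Classical.arbitrary V

/-- Connected `N`-partition of the vertex set. -/
def IsConnPart {V : Type*} (G : SimpleGraph V) {N : ℕ} (p : Fin N → Set V) : Prop :=
  (⋃ i, p i) = Set.univ ∧ (∀ i j, i ≠ j → p i ∩ p j = ∅) ∧
    (∀ i, (p i).Nonempty) ∧ (∀ i, ConnectedIn G (p i))

/-- Multicenter cost `H_multicenter(p, c) = ∑ᵢ H₁(cᵢ; pᵢ)`. -/
noncomputable def Hmc {V : Type*} [Fintype V] (G : SimpleGraph V) (w : V → V → ℝ≥0∞)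
    (φ : V → ℝ≥0∞) {N : ℕ} (p : Fin N → Set V) (c : Fin N → V) : ℝ≥0∞ :=
  ∑ i, H1 G w φ (c i) (p i)

/-- `H_exp(p) = ∑ᵢ H₁(Cd(pᵢ); pᵢ)`. -/
noncomputable def Hexp {V : Type*} [Fintype V] [LinearOrder V] [Nonempty V]
    (G : SimpleGraph V) (w : V → V → ℝ≥0∞) (φ : V → ℝ≥0∞) {N : ℕ}
    (p : Fin N → Set V) : ℝ≥0∞ :=
  ∑ i, H1 G w φ (Cd G w φ (p i)) (p i)

/-- `p` is a Voronoi partition of `Q` generated by `c` (distances `d_G` in the full graph). -/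
def IsVoronoi {V : Type*} (G : SimpleGraph V) (w : V → V → ℝ≥0∞) {N : ℕ}
    (p : Fin N → Set V) (c : Fin N → V) : Prop :=
  ∀ i, c i ∈ p i ∧ ∀ k ∈ p i, ∀ j, j ≠ i →
    gdist G w Set.univ k (c i) ≤ gdist G w Set.univ k (c j)

/-- Two-center cost `D(a,b) = ∑_{h ∈ u} min{d_u(h,a), d_u(h,b)}`. -/
noncomputable def Dtwo {V : Type*} [Fintype V] (G : SimpleGraph V) (w : V → V → ℝ≥0∞)
    (u : Set V) (a b : V) : ℝ≥0∞ :=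
  ∑ h : V, u.indicator (fun h => min (gdist G w u h a) (gdist G w u h b)) h

/-- `p` is a pairwise-optimal connected `N`-partition. -/
def PairwiseOptimal {V : Type*} [Fintype V] [LinearOrder V] [Nonempty V]
    (G : SimpleGraph V) (w : V → V → ℝ≥0∞) (φ : V → ℝ≥0∞) {N : ℕ}
    (p : Fin N → Set V) : Prop :=
  IsConnPart G p ∧ ∀ i j : Fin N, i ≠ j → AdjSets G (p i) (p j) →
    H1 G w φ (Cd G w φ (p i)) (p i) + H1 G w φ (Cd G w φ (p j)) (p j)
      = ⨅ a ∈ p i ∪ p j, ⨅ b ∈ p i ∪ p j, Dtwo G w (p i ∪ p j) a b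

/-- `p` is centroidal Voronoi in pairs. -/
def CVIP {V : Type*} [Fintype V] [LinearOrder V] [Nonempty V]
    (G : SimpleGraph V) (w : V → V → ℝ≥0∞) (φ : V → ℝ≥0∞) {N : ℕ}
    (p : Fin N → Set V) : Prop :=
  ∀ i j : Fin N, i ≠ j → AdjSets G (p i) (p j) → ∀ k ∈ p i,
    gdist G w (p i ∪ p j) k (Cd G w φ (p i)) ≤ gdist G w (p i ∪ p j) k (Cd G w φ (p j))

/-!
The union `u` of the two adjacent regions is connected. Let `x ∈ u` be at least as close to `a`
as to `b`, let `v` lie on a shortest walk from `x` to `a`, and let `r` be the (finite) weight of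
the part of the walk up to `v`. Then `r + d(v,a) ≤ d(x,a) ≤ d(x,b) ≤ r + d(v,b)`, so `v` is again
at least as close to `a` as to `b`: the walk stays inside `W_a`. Likewise, with strict
inequalities, every vertex of `W_b` is joined to `b` inside `W_b`, and positive edge weights put
`b` in `W_b`. Shortest walks exist because only the finitely many walks without repeated vertices
matter.
-/

lemma List.exists_eq_append_cons_append_cons_of_not_nodup {α : Type*} {l : List α}
    (h : ¬ l.Nodup) : ∃ a s₁ s₂ s₃, l = s₁ ++ a :: s₂ ++ a :: s₃ := by
  obtain ⟨a, ha⟩ := not_forall_not.mp (mt List.nodup_iff_sublist.mpr h)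
  obtain ⟨r₁, r₂, rfl, hr₁, hr₂⟩ := List.cons_sublist_iff.mp ha
  obtain ⟨s₁, s₂, rfl⟩ := List.append_of_mem hr₁
  obtain ⟨s₃, s₄, rfl⟩ := List.append_of_mem (List.singleton_sublist.mp hr₂)
  exact ⟨a, s₁, s₂ ++ s₃, s₄, by simp⟩

section Walks

variable {V : Type*} {G : SimpleGraph V} {w : V → V → ℝ≥0∞} {S : Set V} {x y v : V}
  {l l₁ l₂ s t : List V}

@[simp] lemma pathWeight_nil : pathWeight w ([] : List V) = 0 := by
  simp [pathWeight]

@[simp] lemma pathWeight_singleton : pathWeight w [x] = 0 := by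
  simp [pathWeight]

@[simp] lemma pathWeight_cons_cons :
    pathWeight w (x :: y :: l) = w x y + pathWeight w (y :: l) := by
  rw [pathWeight]

lemma pathWeight_append_cons (s t : List V) (v : V) :
    pathWeight w (s ++ v :: t) = pathWeight w (s ++ [v]) + pathWeight w (v :: t) := by
  induction s with
  | nil => simp
  | cons a s ih =>
    cases s with
    | nil => simp
    | cons b s => simp only [List.cons_append, pathWeight_cons_cons] at ih ⊢; rw [ih, add_assoc]

lemma pathWeight_ne_top (hfin : ∀ a b, G.Adj a b → w a b ≠ ⊤) :
    ∀ {l : List V}, l.Chain' G.Adj → pathWeight w l ≠ ⊤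
  | [], _ | [_], _ => by simp
  | a :: b :: l, hl => by
    rw [List.Chain', List.isChain_cons_cons] at hl
    simpa [not_or] using ⟨hfin a b hl.1, pathWeight_ne_top hfin hl.2⟩

lemma pathWeight_pos (hpos : ∀ a b, G.Adj a b → 0 < w a b) (hl : IsWalkIn G S x y l)
    (hxy : x ≠ y) : 0 < pathWeight w l := by
  obtain ⟨hc, -, hh, ht⟩ := hl
  match l, hc, hh, ht with
  | [_], _, hh, ht => simp_all
  | a :: b :: l, hc, _, _ =>
    rw [List.Chain', List.isChain_cons_cons] at hc
    exact (hpos a b hc.1).trans_le (by simp)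

lemma isWalkIn_singleton (hx : x ∈ S) : IsWalkIn G S x x [x] := by
  simp [IsWalkIn, hx, List.Chain']

lemma IsWalkIn.sep {P : V → Prop} (h : IsWalkIn G S x y l) (hP : ∀ v ∈ l, P v) :
    IsWalkIn G {v ∈ S | P v} x y l :=
  ⟨h.1, fun v hv => ⟨h.2.1 v hv, hP v hv⟩, h.2.2⟩

lemma IsWalkIn.mono {T : Set V} (h : IsWalkIn G S x y l) (hST : S ⊆ T) : IsWalkIn G T x y l :=
  ⟨h.1, fun v hv => hST (h.2.1 v hv), h.2.2⟩

lemma IsWalkIn.exists_eq_cons (h : IsWalkIn G S x y l) : ∃ t, l = x :: t :=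
  List.head?_eq_some_iff.mp h.2.2.1

lemma IsWalkIn.exists_eq_concat (h : IsWalkIn G S x y l) : ∃ s, l = s ++ [y] :=
  List.getLast?_eq_some_iff.mp h.2.2.2

lemma IsWalkIn.reverse (h : IsWalkIn G S x y l) : IsWalkIn G S y x l.reverse := by
  obtain ⟨hc, hm, hh, ht⟩ := h
  refine ⟨?_, fun v hv => hm v (List.mem_reverse.mp hv), by simpa using ht, by simpa using hh⟩
  rw [List.Chain', List.isChain_reverse]
  exact hc.imp fun _ _ hab => hab.symm

lemma isWalkIn_append_cons_iff :
    IsWalkIn G S x y (s ++ v :: t) ↔ IsWalkIn G S x v (s ++ [v]) ∧ IsWalkIn G S v y (v :: t) := by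
  have hhead : (s ++ v :: t).head? = (s ++ [v]).head? := by cases s <;> rfl
  have hlast : (s ++ v :: t).getLast? = (v :: t).getLast? :=
    List.getLast?_append_of_ne_nil _ (List.cons_ne_nil v t)
  rw [IsWalkIn, IsWalkIn, IsWalkIn, List.Chain', List.Chain', List.Chain', List.isChain_split,
    hhead, hlast, List.getLast?_concat, List.head?_cons]
  simp only [List.forall_mem_append, List.forall_mem_cons, List.mem_singleton]
  grind

lemma IsWalkIn.append_tail (h₁ : IsWalkIn G S x v l₁) (h₂ : IsWalkIn G S v y l₂) :
    IsWalkIn G S x y (l₁ ++ l₂.tail) := by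
  obtain ⟨s, rfl⟩ := h₁.exists_eq_concat
  obtain ⟨t, rfl⟩ := h₂.exists_eq_cons
  simpa using isWalkIn_append_cons_iff.mpr ⟨h₁, h₂⟩

lemma IsWalkIn.pathWeight_append_tail (h₁ : IsWalkIn G S x v l₁) (h₂ : IsWalkIn G S v y l₂) :
    pathWeight w (l₁ ++ l₂.tail) = pathWeight w l₁ + pathWeight w l₂ := by
  obtain ⟨s, rfl⟩ := h₁.exists_eq_concat
  obtain ⟨t, rfl⟩ := h₂.exists_eq_cons
  simpa using pathWeight_append_cons (w := w) s t v

-- Cut out the loop between two visits of the same vertex.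
lemma IsWalkIn.exists_nodup {x y : V} {l : List V} (h : IsWalkIn G S x y l) :
    ∃ l', IsWalkIn G S x y l' ∧ l'.Nodup ∧ pathWeight w l' ≤ pathWeight w l := by
  by_cases hl : l.Nodup
  · exact ⟨l, h, hl, le_rfl⟩
  obtain ⟨a, s₁, s₂, s₃, rfl⟩ := List.exists_eq_append_cons_append_cons_of_not_nodup hl
  obtain ⟨h₁, h₃⟩ := isWalkIn_append_cons_iff.mp h
  rw [List.append_assoc, List.cons_append] at h₁
  have h₂ := (isWalkIn_append_cons_iff.mp h₁).1
  have h' : IsWalkIn G S x y (s₁ ++ a :: s₃) := isWalkIn_append_cons_iff.mpr ⟨h₂, h₃⟩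
  obtain ⟨l', hl', hnd, hle⟩ := IsWalkIn.exists_nodup h'
  refine ⟨l', hl', hnd, hle.trans ?_⟩
  calc pathWeight w (s₁ ++ a :: s₃) = pathWeight w (s₁ ++ [a]) + pathWeight w (a :: s₃) :=
        pathWeight_append_cons s₁ s₃ a
    _ ≤ pathWeight w (s₁ ++ [a]) + (pathWeight w (a :: s₂ ++ [a]) + pathWeight w (a :: s₃)) := by
        gcongr; exact le_add_self
    _ = pathWeight w (s₁ ++ a :: s₂ ++ a :: s₃) := by
        rw [pathWeight_append_cons (s₁ ++ a :: s₂), List.append_assoc, List.cons_append,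
          pathWeight_append_cons s₁ (s₂ ++ [a]), add_assoc]
termination_by l.length
decreasing_by subst_vars; simp

end Walks

section Distance

variable {V : Type*} {G : SimpleGraph V} {w : V → V → ℝ≥0∞} {S : Set V} {x y z v c : V}
  {l : List V}

lemma gdist_le_pathWeight (h : IsWalkIn G S x y l) : gdist G w S x y ≤ pathWeight w l :=
  sInf_le ⟨l, h, rfl⟩

lemma gdist_self (hx : x ∈ S) : gdist G w S x x = 0 := by
  simpa using gdist_le_pathWeight (w := w) (isWalkIn_singleton (G := G) hx)

lemma exists_isWalkIn_of_gdist_ne_top (h : gdist G w S x y ≠ ⊤) : ∃ l, IsWalkIn G S x y l := by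
  by_contra! hno
  have hempty : {l | IsWalkIn G S x y l} = ∅ := Set.eq_empty_of_forall_notMem hno
  exact h (by rw [gdist, hempty, Set.image_empty, sInf_empty])

lemma IsWalkIn.gdist_le_add (h : IsWalkIn G S x v l) :
    gdist G w S x z ≤ pathWeight w l + gdist G w S v z := by
  calc gdist G w S x z ≤ ⨅ m ∈ {m | IsWalkIn G S v z m}, pathWeight w l + pathWeight w m :=
        le_iInf₂ fun m hm =>
          h.pathWeight_append_tail hm ▸ gdist_le_pathWeight (h.append_tail hm)
    _ = pathWeight w l + gdist G w S v z := by
        simp_rw [gdist, sInf_image, ENNReal.add_iInf]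

lemma IsWalkIn.exists_prefix_of_pathWeight_eq_gdist (hl : IsWalkIn G S x c l)
    (hmin : pathWeight w l = gdist G w S x c) (hv : v ∈ l) :
    ∃ l', IsWalkIn G S x v l' ∧ pathWeight w l' + gdist G w S v c ≤ gdist G w S x c := by
  obtain ⟨s, t, rfl⟩ := List.append_of_mem hv
  obtain ⟨hs, ht⟩ := isWalkIn_append_cons_iff.mp hl
  refine ⟨s ++ [v], hs, ?_⟩
  rw [← hmin, pathWeight_append_cons s t v]
  exact add_le_add_right (gdist_le_pathWeight ht) _

variable [Finite V]

lemma exists_isWalkIn_pathWeight_eq_gdist (h : ∃ l, IsWalkIn G S x y l) :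
    ∃ l, IsWalkIn G S x y l ∧ pathWeight w l = gdist G w S x y := by
  set W := {l | IsWalkIn G S x y l ∧ l.Nodup}
  have hfin : (pathWeight w '' W).Finite :=
    ((List.finite_length_le V (Nat.card V)).subset fun l hl => hl.2.length_le_natCard).image _
  have hne : (pathWeight w '' W).Nonempty := by
    obtain ⟨l, hl⟩ := h
    obtain ⟨l', hl', hnd, -⟩ := hl.exists_nodup (w := w)
    exact ⟨_, l', ⟨hl', hnd⟩, rfl⟩
  obtain ⟨l, ⟨hl, -⟩, hmin⟩ := hne.csInf_mem hfin
  refine ⟨l, hl, le_antisymm ?_ (gdist_le_pathWeight hl)⟩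
  refine hmin ▸ le_sInf ?_
  rintro - ⟨m, hm, rfl⟩
  obtain ⟨m', hm', hnd, hle⟩ := IsWalkIn.exists_nodup (w := w) hm
  exact (csInf_le hfin.bddBelow ⟨m', ⟨hm', hnd⟩, rfl⟩).trans hle

lemma gdist_pos (hpos : ∀ a b, G.Adj a b → 0 < w a b) (hxy : x ≠ y) : 0 < gdist G w S x y := by
  by_cases htop : gdist G w S x y = ⊤
  · simp [htop]
  obtain ⟨l, hl, hmin⟩ :=
    exists_isWalkIn_pathWeight_eq_gdist (exists_isWalkIn_of_gdist_ne_top htop)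
  exact hmin ▸ pathWeight_pos hpos hl hxy

end Distance

section Connectivity

variable {V : Type*} {G : SimpleGraph V} {w : V → V → ℝ≥0∞} {S A B : Set V} {x a b c : V}

lemma connectedIn_of_forall_isWalkIn (hc : c ∈ S) (h : ∀ x ∈ S, ∃ l, IsWalkIn G S x c l) :
    ConnectedIn G S := by
  refine ⟨⟨c, hc⟩, fun x hx y hy => ?_⟩
  obtain ⟨lx, hlx⟩ := h x hx
  obtain ⟨ly, hly⟩ := h y hy
  exact ⟨_, hlx.append_tail hly.reverse⟩

lemma ConnectedIn.union (hA : ConnectedIn G A) (hB : ConnectedIn G B) (hAB : AdjSets G A B) :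
    ConnectedIn G (A ∪ B) := by
  obtain ⟨a, ha, b, hb, hab⟩ := hAB
  have hedge : IsWalkIn G (A ∪ B) b a [b, a] := by
    simp [IsWalkIn, List.Chain', hab.symm, ha, hb]
  refine connectedIn_of_forall_isWalkIn (Or.inl ha) fun x hx => ?_
  rcases hx with hx | hx
  · obtain ⟨l, hl⟩ := hA.2 x hx a ha
    exact ⟨l, hl.mono Set.subset_union_left⟩
  · obtain ⟨l, hl⟩ := hB.2 x hx b hb
    exact ⟨_, (hl.mono Set.subset_union_right).append_tail hedge⟩

variable [Finite V]

lemma exists_isWalkIn_setOf_gdist_le (hfin : ∀ a b, G.Adj a b → w a b ≠ ⊤)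
    (hx : ∃ l, IsWalkIn G S x a l) (hxab : gdist G w S x a ≤ gdist G w S x b) :
    ∃ l, IsWalkIn G {y ∈ S | gdist G w S y a ≤ gdist G w S y b} x a l := by
  obtain ⟨l, hl, hmin⟩ := exists_isWalkIn_pathWeight_eq_gdist (w := w) hx
  refine ⟨l, hl.sep fun v hv => ?_⟩
  obtain ⟨l', hl', hle⟩ := hl.exists_prefix_of_pathWeight_eq_gdist hmin hv
  have hr : pathWeight w l' ≠ ⊤ := pathWeight_ne_top hfin hl'.1
  refine (ENNReal.add_le_add_iff_left hr).mp ?_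
  calc pathWeight w l' + gdist G w S v a ≤ gdist G w S x a := hle
    _ ≤ gdist G w S x b := hxab
    _ ≤ pathWeight w l' + gdist G w S v b := hl'.gdist_le_add

lemma exists_isWalkIn_setOf_gdist_lt (hx : ∃ l, IsWalkIn G S x b l)
    (hxba : gdist G w S x b < gdist G w S x a) :
    ∃ l, IsWalkIn G {y ∈ S | gdist G w S y b < gdist G w S y a} x b l := by
  obtain ⟨l, hl, hmin⟩ := exists_isWalkIn_pathWeight_eq_gdist (w := w) hx
  refine ⟨l, hl.sep fun v hv => ?_⟩
  obtain ⟨l', hl', hle⟩ := hl.exists_prefix_of_pathWeight_eq_gdist hmin hv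
  refine lt_of_add_lt_add_left (a := pathWeight w l') ?_
  calc pathWeight w l' + gdist G w S v b ≤ gdist G w S x b := hle
    _ < gdist G w S x a := hxba
    _ ≤ pathWeight w l' + gdist G w S v a := hl'.gdist_le_add

lemma ConnectedIn.setOf_gdist_le (hfin : ∀ a b, G.Adj a b → w a b ≠ ⊤) (hS : ConnectedIn G S)
    (ha : a ∈ S) : ConnectedIn G {x ∈ S | gdist G w S x a ≤ gdist G w S x b} :=
  connectedIn_of_forall_isWalkIn ⟨ha, by simp [gdist_self ha]⟩ fun x hx =>
    exists_isWalkIn_setOf_gdist_le hfin (hS.2 x hx.1 a ha) hx.2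

lemma ConnectedIn.setOf_gdist_lt (hpos : ∀ a b, G.Adj a b → 0 < w a b) (hS : ConnectedIn G S)
    (hb : b ∈ S) (hab : a ≠ b) : ConnectedIn G {x ∈ S | gdist G w S x b < gdist G w S x a} :=
  connectedIn_of_forall_isWalkIn ⟨hb, gdist_self hb ▸ gdist_pos hpos hab.symm⟩ fun x hx =>
    exists_isWalkIn_setOf_gdist_lt (hS.2 x hx.1 b hb) hx.2

end Connectivity

lemma IsConnPart.of_replace_pair {V : Type*} {G : SimpleGraph V} {N : ℕ} {p q : Fin N → Set V}
    (hp : IsConnPart G p) {i j : Fin N} (hij : i ≠ j) (hunion : q i ∪ q j = p i ∪ p j)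
    (hdisj : Disjoint (q i) (q j)) (hqi : ConnectedIn G (q i)) (hqj : ConnectedIn G (q j))
    (hother : ∀ k, k ≠ i → k ≠ j → q k = p k) : IsConnPart G q := by
  obtain ⟨hcover, hpdisj, -, hconn⟩ := hp
  have hpdisj' : ∀ k m, k ≠ m → Disjoint (p k) (p m) := fun k m hkm =>
    Set.disjoint_iff_inter_eq_empty.mpr (hpdisj k m hkm)
  have hconn' : ∀ k, ConnectedIn G (q k) := fun k => by
    by_cases hki : k = i; · exact hki ▸ hqi
    by_cases hkj : k = j; · exact hkj ▸ hqj
    exact hother k hki hkj ▸ hconn k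
  have hsub : ∀ k, k = i ∨ k = j → q k ⊆ p i ∪ p j := by
    rintro k (rfl | rfl) <;> simp [← hunion]
  have hout : ∀ m, m ≠ i → m ≠ j → Disjoint (p i ∪ p j) (q m) := fun m hmi hmj =>
    hother m hmi hmj ▸ (hpdisj' i m (Ne.symm hmi)).union_left (hpdisj' j m (Ne.symm hmj))
  refine ⟨?_, fun k m hkm => Set.disjoint_iff_inter_eq_empty.mp ?_, fun k => (hconn' k).1, hconn'⟩
  · refine Set.eq_univ_of_forall fun x => ?_
    obtain ⟨k, hk⟩ := Set.mem_iUnion.mp (hcover ▸ Set.mem_univ x)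
    by_cases hkij : k = i ∨ k = j
    · have hx : x ∈ q i ∪ q j := hunion ▸ hkij.elim (· ▸ Or.inl hk) (· ▸ Or.inr hk)
      exact hx.elim (Set.mem_iUnion_of_mem i) (Set.mem_iUnion_of_mem j)
    · obtain ⟨hki, hkj⟩ := not_or.mp hkij
      exact Set.mem_iUnion_of_mem k (hother k hki hkj ▸ hk)
  · by_cases hk : k = i ∨ k = j <;> by_cases hm : m = i ∨ m = j
    · rcases hk with rfl | rfl <;> rcases hm with rfl | rfl
      exacts [absurd rfl hkm, hdisj, hdisj.symm, absurd rfl hkm]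
    · obtain ⟨hmi, hmj⟩ := not_or.mp hm
      exact (hout m hmi hmj).mono_left (hsub k hk)
    · obtain ⟨hki, hkj⟩ := not_or.mp hk
      exact ((hout k hki hkj).mono_left (hsub m hm)).symm
    · obtain ⟨hki, hkj⟩ := not_or.mp hk
      obtain ⟨hmi, hmj⟩ := not_or.mp hm
      rw [hother k hki hkj, hother m hmi hmj]
      exact hpdisj' k m hkm

variable {V : Type*} [Fintype V] [LinearOrder V] [Nonempty V]

theorem gossip_step_preserves_connpart_general (G : SimpleGraph V) (w : V → V → ℝ≥0∞)
    (hw : ∀ a b, G.Adj a b → 0 < w a b ∧ w a b ≠ ⊤)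
    {N : ℕ} (p q : Fin N → Set V) (hp : IsConnPart G p) (i j : Fin N) (hij : i ≠ j)
    (hadj : AdjSets G (p i) (p j)) (a b : V)
    (ha : a ∈ p i ∪ p j) (hb : b ∈ p i ∪ p j) (hab : a ≠ b)
    (hqi : q i = {x ∈ p i ∪ p j |
      gdist G w (p i ∪ p j) x a ≤ gdist G w (p i ∪ p j) x b})
    (hqj : q j = {x ∈ p i ∪ p j |
      gdist G w (p i ∪ p j) x b < gdist G w (p i ∪ p j) x a})
    (hother : ∀ k, k ≠ i → k ≠ j → q k = p k) :
    IsConnPart G q := by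
  have hu : ConnectedIn G (p i ∪ p j) := (hp.2.2.2 i).union (hp.2.2.2 j) hadj
  refine hp.of_replace_pair hij ?_ ?_ ?_ ?_ hother
  · ext x
    simp only [hqi, hqj, Set.mem_union, Set.mem_ofPred_eq, ← and_or_left, le_or_gt, and_true]
  · rw [hqi, hqj, Set.disjoint_left]
    exact fun x hxa hxb => not_lt.mpr hxa.2 hxb.2
  · exact hqi ▸ hu.setOf_gdist_le (fun a b h => (hw a b h).2) ha
  · exact hqj ▸ hu.setOf_gdist_lt (fun a b h => (hw a b h).1) hb hab

theorem gossip_step_preserves_connpart (G : SimpleGraph V) (w : V → V → ℝ≥0∞)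
    (φ : V → ℝ≥0∞) (hG : G.Connected) (hw : ∀ a b, G.Adj a b → 0 < w a b ∧ w a b ≠ ⊤)
    (hwsymm : ∀ a b, w a b = w b a) (hφ : ∀ v, 0 < φ v ∧ φ v ≠ ⊤)
    {N : ℕ} (p q : Fin N → Set V) (hp : IsConnPart G p) (i j : Fin N) (hij : i ≠ j)
    (hadj : AdjSets G (p i) (p j)) (a b : V)
    (ha : a ∈ p i ∪ p j) (hb : b ∈ p i ∪ p j) (hab : a ≠ b)
    (hopt : ∀ a' ∈ p i ∪ p j, ∀ b' ∈ p i ∪ p j,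
      Dtwo G w (p i ∪ p j) a b ≤ Dtwo G w (p i ∪ p j) a' b')
    (hqi : q i = {x ∈ p i ∪ p j |
      gdist G w (p i ∪ p j) x a ≤ gdist G w (p i ∪ p j) x b})
    (hqj : q j = {x ∈ p i ∪ p j |
      gdist G w (p i ∪ p j) x b < gdist G w (p i ∪ p j) x a})
    (hother : ∀ k, k ≠ i → k ≠ j → q k = p k) :
    IsConnPart G q :=
  gossip_step_preserves_connpart_general G w hw p q hp i j hij hadj a b ha hb hab hqi hqj hother
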